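/- arXiv:2510.23433 — 2 statements merged into one kernel-verified Lean document; each statement's English description precedes it below -/
import Mathlib

section
/- Let X, Y, Z be cubic matrices of order r over ℂ whose traces with respect to the first two indices vanish, i.e. Σ_i X_{iik} = Σ_i Y_{iik} = Σ_i Z_{iik} = 0 for every k. Then the ternary ω-commutator [X,Y,Z] (with respect to the cubic-matrix ternary product (A·B·C)_{ijk} = Σ_{p,r,s} A_{ijp} B_{rsp} C_{srk}) also has vanishing trace with respect to the first two indices: Σ_i [X,Y,Z]_{iik} = 0 for every k. Hence the cubic matrices of order r with zero trace with respect to the first two indices form a subalgebra of the ternary ω-Lie algebra of all cubic matrices of order r. -/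
/-- The primitive cube root of unity ω = exp(2πi/3). -/
noncomputable def ω : ℂ := Complex.exp (2 * Real.pi * Complex.I / 3)

/-- The ternary multiplication of cubic matrices of order `r`:
`(A·B·C)_{ijk} = Σ_{p,q,s} A_{ijp} B_{qsp} C_{sqk}`. -/
noncomputable def cubicTernary {r : ℕ} (A B C : Fin r → Fin r → Fin r → ℂ) :
    Fin r → Fin r → Fin r → ℂ :=
  fun i j k => ∑ p, ∑ q, ∑ s, A i j p * B q s p * C s q k

/-- The ternary ω-commutator of a ternary multiplication `m`. -/
noncomputable def tbr {V : Type*} [AddCommGroup V] [Module ℂ V]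
    (m : V → V → V → V) (s u v : V) : V :=
  m s u v + ω • m u v s + (ω ^ 2) • m v s u + m v u s + (ω ^ 2) • m u s v + ω • m s v u

lemma trace_cubicTernary_zero {r : ℕ} (A B C : Fin r → Fin r → Fin r → ℂ)
    (hA : ∀ k, ∑ i, A i i k = 0) (k : Fin r) :
    ∑ i, cubicTernary A B C i i k = 0 := by
  simp only [cubicTernary]
  rw [Finset.sum_comm]
  apply Finset.sum_eq_zero
  intro p _
  rw [Finset.sum_comm]
  apply Finset.sum_eq_zero
  intro q _
  rw [Finset.sum_comm]
  apply Finset.sum_eq_zero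
  intro s _
  simp only [mul_assoc, ← Finset.sum_mul]
  rw [hA p, zero_mul]

/-- If three cubic matrices of order `r` have zero trace with respect to the first two
indices, then so does their ternary ω-commutator; hence such cubic matrices form a
subalgebra of the ternary ω-Lie algebra of all cubic matrices of order `r`. -/
theorem trace12_zero_closed_under_omegaCommutator
    (r : ℕ) (X Y Z : Fin r → Fin r → Fin r → ℂ)
    (hX : ∀ k, ∑ i, X i i k = 0)
    (hY : ∀ k, ∑ i, Y i i k = 0)
    (hZ : ∀ k, ∑ i, Z i i k = 0) :
    ∀ k, ∑ i, tbr cubicTernary X Y Z i i k = 0 := by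
  intro k
  simp only [tbr, Pi.add_apply, Pi.smul_apply, smul_eq_mul, Finset.sum_add_distrib,
    ← Finset.mul_sum]
  rw [trace_cubicTernary_zero X Y Z hX, trace_cubicTernary_zero Y Z X hY,
    trace_cubicTernary_zero Z X Y hZ, trace_cubicTernary_zero Z Y X hZ,
    trace_cubicTernary_zero Y X Z hY, trace_cubicTernary_zero X Z Y hX]
  ring
end

section
/- Let G₃ and G₄ be the cubic matrices of order 2 over ℂ with entries (G₃)_{121} = −i, (G₃)_{211} = −i/2 and all other entries 0, and (G₄)_{121} = −1, (G₄)_{211} = 1/2 and all other entries 0. Then, with respect to the ternary ω-commutator [s,u,v] = s·u·v + ω·u·v·s + ω̄·v·s·u + v·u·s + ω̄·u·s·v + ω·s·v·u built from the cubic-matrix product (A·B·C)_{ijk} = Σ_{p,r,s} A_{ijp} B_{rsp} C_{srk}, one has [G₃,G₄,G₃] = G₄ and [G₄,G₃,G₄] = G₃; hence the span of G₃ and G₄ is a two-dimensional subalgebra of the ternary ω-Lie algebra of cubic matrices of order 2, isomorphic to the type II algebra in the classification of two-dimensional ternary ω-Lie algebras. -/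
/-- The cubic matrix `G₃` of order 2, with `(G₃)₁₂₁ = −i`, `(G₃)₂₁₁ = −i/2` and all other
entries `0` (indices shifted to `0,1`). -/
noncomputable def G₃ : Fin 2 → Fin 2 → Fin 2 → ℂ :=
  ![![![0, 0], ![-Complex.I, 0]], ![![-Complex.I / 2, 0], ![0, 0]]]

/-- The cubic matrix `G₄` of order 2, with `(G₄)₁₂₁ = −1`, `(G₄)₂₁₁ = 1/2` and all other
entries `0` (indices shifted to `0,1`). -/
noncomputable def G₄ : Fin 2 → Fin 2 → Fin 2 → ℂ :=
  ![![![0, 0], ![-1, 0]], ![![1 / 2, 0], ![0, 0]]]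

/-! The cubic matrices supported on the slice `k = 0` (the paper's `k = 1`) form a subspace on
which the ternary product is `A·B·C = β(B, C) A`, with `β(B, C) = tr(B₀ C₀)` the trace form of
these slices.
Since `β` is symmetric, `1 + ω + ω² = 0` collapses the ω-commutator to
`[s, u, v] = -ω² β(u, v) s - β(s, v) u - ω β(s, u) v`, a combination of its arguments, so every
subspace of that slice is closed under the bracket. On `span {G₃, G₄}` the form is diagonal with
`β(G₃, G₃) = β(G₄, G₄) = -1`, which gives the two relations of type II. -/

theorem omega_sq_add_omega_add_one : ω ^ 2 + ω + 1 = 0 := by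
  have hω : IsPrimitiveRoot ω 3 := by
    simpa [ω] using Complex.isPrimitiveRoot_exp 3 (by norm_num)
  have h := hω.geom_sum_eq_zero (by norm_num)
  simp only [Finset.sum_range_succ, Finset.sum_range_zero] at h
  linear_combination h

theorem tbr_eq_of_eq_smul {V : Type*} [AddCommGroup V] [Module ℂ V] {m : V → V → V → V}
    {β : V → V → ℂ} {S : Set V} (hm : ∀ a ∈ S, ∀ b ∈ S, ∀ c ∈ S, m a b c = β b c • a)
    (hβ : ∀ b c, β b c = β c b) ⦃s u v : V⦄ (hs : s ∈ S) (hu : u ∈ S) (hv : v ∈ S) :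
    tbr m s u v = (-(ω ^ 2 * β u v)) • s + (-β s v) • u + (-(ω * β s u)) • v := by
  simp only [tbr, hm _ hs _ hu _ hv, hm _ hu _ hv _ hs, hm _ hv _ hs _ hu, hm _ hv _ hu _ hs,
    hm _ hu _ hs _ hv, hm _ hs _ hv _ hu, hβ v s, hβ u s, hβ v u, smul_smul]
  linear_combination (norm := module)
    omega_sq_add_omega_add_one • (β u v • s + β s v • u + β s u • v)

section CubicMatrix

variable {r : ℕ}

def cubicSlice (A : Fin r → Fin r → Fin r → ℂ) (p : Fin r) : Matrix (Fin r) (Fin r) ℂ :=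
  Matrix.of fun i j => A i j p

def cubicSliceTraceForm (p : Fin r) (B C : Fin r → Fin r → Fin r → ℂ) : ℂ :=
  (cubicSlice B p * cubicSlice C p).trace

theorem cubicSliceTraceForm_apply (p : Fin r) (B C : Fin r → Fin r → Fin r → ℂ) :
    cubicSliceTraceForm p B C = ∑ q, ∑ s, B q s p * C s q p := by
  simp [cubicSliceTraceForm, cubicSlice, Matrix.trace, Matrix.mul_apply]

theorem cubicSliceTraceForm_comm (p : Fin r) (B C : Fin r → Fin r → Fin r → ℂ) :
    cubicSliceTraceForm p B C = cubicSliceTraceForm p C B :=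
  Matrix.trace_mul_comm _ _

variable (r) in
def supportedOnSlice (p : Fin r) : Submodule ℂ (Fin r → Fin r → Fin r → ℂ) where
  carrier := {A | ∀ i j k, k ≠ p → A i j k = 0}
  zero_mem' := by simp
  add_mem' hA hB i j k hk := by simp [hA i j k hk, hB i j k hk]
  smul_mem' c A hA i j k hk := by simp [hA i j k hk]

theorem cubicTernary_eq_smul {p : Fin r} {A C : Fin r → Fin r → Fin r → ℂ}
    (hA : A ∈ supportedOnSlice r p) (hC : C ∈ supportedOnSlice r p)
    (B : Fin r → Fin r → Fin r → ℂ) :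
    cubicTernary A B C = cubicSliceTraceForm p B C • A := by
  funext i j k
  have hA' : ∀ q ≠ p, ∑ a, ∑ b, A i j q * B a b q * C b a k = 0 := fun q hq => by
    simp [hA i j q hq]
  rw [cubicTernary, Finset.sum_eq_single p (fun q _ hq => hA' q hq) (by simp)]
  by_cases hk : k = p
  · subst hk
    simp [cubicSliceTraceForm_apply, Finset.mul_sum, mul_comm, mul_left_comm]
  · simp [hA i j k hk, hC _ _ k hk]

end CubicMatrix

theorem span_G₃_G₄_le_supportedOnSlice :
    Submodule.span ℂ {G₃, G₄} ≤ supportedOnSlice 2 0 := by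
  rw [Submodule.span_le]
  rintro _ (rfl | rfl) i j k hk <;>
    fin_cases i <;> fin_cases j <;> fin_cases k <;> simp_all [G₃, G₄]

theorem cubicSliceTraceForm_G₃_G₃ : cubicSliceTraceForm 0 G₃ G₃ = -1 := by
  simp [cubicSliceTraceForm_apply, G₃, Fin.sum_univ_two, Complex.ext_iff]

theorem cubicSliceTraceForm_G₄_G₄ : cubicSliceTraceForm 0 G₄ G₄ = -1 := by
  norm_num [cubicSliceTraceForm_apply, G₄, Fin.sum_univ_two]

theorem cubicSliceTraceForm_G₃_G₄ : cubicSliceTraceForm 0 G₃ G₄ = 0 := by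
  norm_num [cubicSliceTraceForm_apply, G₃, G₄, Fin.sum_univ_two, Complex.ext_iff]

/-- With respect to the ternary ω-commutator of the cubic-matrix product one has
`[G₃,G₄,G₃] = G₄` and `[G₄,G₃,G₄] = G₃`; hence the span of `G₃, G₄` is a two-dimensional
subalgebra of the ternary ω-Lie algebra of cubic matrices of order 2, isomorphic to the
type II algebra of the classification of two-dimensional ternary ω-Lie algebras. -/
theorem G₃G₄_typeII_subalgebra :
    tbr cubicTernary G₃ G₄ G₃ = G₄ ∧ tbr cubicTernary G₄ G₃ G₄ = G₃
      ∧ ∀ a b c : Fin 2 → Fin 2 → Fin 2 → ℂ,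
          a ∈ Submodule.span ℂ {G₃, G₄} → b ∈ Submodule.span ℂ {G₃, G₄} →
          c ∈ Submodule.span ℂ {G₃, G₄} →
          tbr cubicTernary a b c ∈ Submodule.span ℂ {G₃, G₄} := by
  have hG₃ : G₃ ∈ Submodule.span ℂ {G₃, G₄} := Submodule.subset_span (by simp)
  have hG₄ : G₄ ∈ Submodule.span ℂ {G₃, G₄} := Submodule.subset_span (by simp)
  have hbr := tbr_eq_of_eq_smul (m := cubicTernary) (β := cubicSliceTraceForm 0)
    (S := Submodule.span ℂ {G₃, G₄})
    (fun a ha b _ c hc => cubicTernary_eq_smul (span_G₃_G₄_le_supportedOnSlice ha)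
      (span_G₃_G₄_le_supportedOnSlice hc) b)
    (cubicSliceTraceForm_comm 0)
  refine ⟨?_, ?_, fun a b c ha hb hc => ?_⟩
  · rw [hbr hG₃ hG₄ hG₃, cubicSliceTraceForm_comm, cubicSliceTraceForm_G₃_G₄,
      cubicSliceTraceForm_G₃_G₃]
    simp
  · rw [hbr hG₄ hG₃ hG₄, cubicSliceTraceForm_G₃_G₄, cubicSliceTraceForm_G₄_G₄,
      cubicSliceTraceForm_comm, cubicSliceTraceForm_G₃_G₄]
    simp
  · rw [hbr ha hb hc]
    exact add_mem (add_mem (Submodule.smul_mem _ _ ha) (Submodule.smul_mem _ _ hb))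
      (Submodule.smul_mem _ _ hc)
end
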